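/- arXiv:1605.08249 — 2 statements merged into one kernel-verified Lean document; each statement's English description precedes it below -/
import Mathlib

section
/- Let γ_c = {x₁y₁² + x₂y₂² = 0, y₃ = 0} ⊂ P¹ × P² with coordinates (x₁:x₂) and (y₁:y₂:y₃). An element (A, B) ∈ PGL₂(ℂ) × PGL₃(ℂ), acting by (x, y) ↦ (Ax, By), preserves γ_c if and only if it is represented by matrices of the form (i) A = [[a₁²,0],[0,1]], B = [[1,0,b₁],[0,a₁,b₂],[0,0,a₂]], or (ii) A = [[0,a₁²],[1,0]], B = [[0,1,b₁],[a₁,0,b₂],[0,0,a₂]], where a₁, a₂ ∈ ℂ* and b₁, b₂ ∈ ℂ. Moreover, the orbit of the point ((1:1), (0:0:1)) under the group G of all such elements is the open set {((x₁:x₂),(y₁:y₂:y₃)) : x₁x₂ ≠ 0 and y₃ ≠ 0}; in particular the action of G on P¹ × P² is quasi-homogeneous. -/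
/-!
Statement 6: the subgroup of `PGL₂(ℂ) × PGL₃(ℂ)` preserving
`γ_c = {x₁y₁² + x₂y₂² = 0, y₃ = 0} ⊂ ℙ¹ × ℙ²` consists exactly of the elements
represented by the matrices (i) or (ii) below, and the orbit of `((1:1),(0:0:1))` under
this group `G` is the open set `{x₁x₂ ≠ 0, y₃ ≠ 0}`; in particular the `G`-action on
`ℙ¹ × ℙ²` is quasi-homogeneous (it has a dense open orbit).

We work with `GL` matrices acting on the projectivizations; an element of `PGL` is
"represented by" a matrix iff any `GL`-lift of it is a nonzero scalar multiple of that
matrix.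
-/

noncomputable section
open scoped Matrix

/-- The complex projective line. -/
abbrev P1C : Type := Projectivization ℂ (Fin 2 → ℂ)

/-- The complex projective plane. -/
abbrev P2C : Type := Projectivization ℂ (Fin 3 → ℂ)

/-- The action of an invertible matrix on projective space. -/
def matAct {n : ℕ} (A : GL (Fin n) ℂ) :
    Projectivization ℂ (Fin n → ℂ) → Projectivization ℂ (Fin n → ℂ) :=
  Projectivization.map ((A : Matrix (Fin n) (Fin n) ℂ).mulVecLin) (by
    intro x y h
    have h2 := congrArg (fun v => (↑(A⁻¹) : Matrix (Fin n) (Fin n) ℂ) *ᵥ v) h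
    simp only [Matrix.mulVecLin_apply, Matrix.mulVec_mulVec] at h2
    rw [A.inv_mul] at h2
    simpa using h2)

/-- The action of a pair of invertible matrices on `ℙ¹ × ℙ²`,
`(x, y) ↦ (Ax, By)`. -/
def pairAct (A : GL (Fin 2) ℂ) (B : GL (Fin 3) ℂ) : P1C × P2C → P1C × P2C :=
  fun z => (matAct A z.1, matAct B z.2)

/-- The curve `γ_c = {x₁ y₁² + x₂ y₂² = 0, y₃ = 0} ⊂ ℙ¹ × ℙ²`.  (The defining
conditions are scaling-invariant, hence well defined on representatives.) -/
def gammaC : Set (P1C × P2C) :=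
  {z | z.1.rep 0 * (z.2.rep 0) ^ 2 + z.1.rep 1 * (z.2.rep 1) ^ 2 = 0 ∧ z.2.rep 2 = 0}

/-- The base point `((1:1), (0:0:1)) ∈ ℙ¹ × ℙ²`. -/
def basePt : P1C × P2C :=
  (Projectivization.mk ℂ ![1, 1] (by intro h; simpa using congrFun h 0),
   Projectivization.mk ℂ ![0, 0, 1] (by intro h; simpa using congrFun h 2))

/-!
Write `A = [[p, q], [r, s]]` and let `[[α, β], [γ, δ]]` be the upper-left block of `B`.
Invariance of `γ_c` at its points `((1 : -t²), (t : 1 : 0))` says that `B` preserves the line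
`y₃ = 0` and that the quartic `(p - q t²)(α t + β)² + (r - s t²)(γ t + δ)²` vanishes
identically. Its five coefficients say that `(p β, r δ)` and `(q α, s γ)` are orthogonal to the
independent vectors `(α, γ)` and `(β, δ)`, hence vanish; so `A` and the block are both diagonal
or both antidiagonal, which is (i) or (ii). Conversely, a pair of type (i) or (ii) multiplies
the equations of `γ_c` by nonzero constants, so `γ_c` is its own preimage under the bijection
`pairAct A B`, hence its own image.

Both types send the base point to `((c a₁² : c), (b₁ : b₂ : a₂))`, and every point with
`x₁ x₂ ≠ 0`, `y₃ ≠ 0` is of this form with `a₁² = x₁ / x₂`.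
-/

open Projectivization

lemma quartic_coeffs_eq_zero {K : Type*} [Field K] [CharZero K] {c₀ c₁ c₂ c₃ c₄ : K}
    (h : ∀ t, c₀ + c₁ * t + c₂ * t ^ 2 + c₃ * t ^ 3 + c₄ * t ^ 4 = 0) :
    c₀ = 0 ∧ c₁ = 0 ∧ c₂ = 0 ∧ c₃ = 0 ∧ c₄ = 0 := by
  have e₀ := h 0
  have e₁ := h 1
  have em₁ := h (-1)
  have e₂ := h 2
  have em₂ := h (-2)
  have h₄ : c₄ = 0 := by linear_combination ((e₂ + em₂) / 2 - 2 * (e₁ + em₁) + 3 * e₀) / 12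
  have h₃ : c₃ = 0 := by linear_combination ((e₂ - em₂) / 2 - (e₁ - em₁)) / 6
  exact ⟨by linear_combination e₀, by linear_combination (e₁ - em₁) / 2 - h₃,
    by linear_combination (e₁ + em₁) / 2 - e₀ - h₄, h₃, h₄⟩

lemma eq_zero_of_orthogonal_of_det_ne_zero {K : Type*} [Field K] {u₁ u₂ x₁ x₂ y₁ y₂ : K}
    (hxy : x₁ * y₂ - y₁ * x₂ ≠ 0) (hx : u₁ * x₁ + u₂ * x₂ = 0) (hy : u₁ * y₁ + u₂ * y₂ = 0) :
    u₁ = 0 ∧ u₂ = 0 := by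
  constructor
  · refine (mul_eq_zero.1 (?_ : u₁ * (x₁ * y₂ - y₁ * x₂) = 0)).resolve_right hxy
    linear_combination y₂ * hx - x₂ * hy
  · refine (mul_eq_zero.1 (?_ : u₂ * (x₁ * y₂ - y₁ * x₂) = 0)).resolve_right hxy
    linear_combination x₁ * hy - y₁ * hx

lemma diagonal_or_antidiagonal {K : Type*} [Field K] {p q r s α β γ δ : K}
    (hpqrs : p * s - q * r ≠ 0) (hαβγδ : α * δ - β * γ ≠ 0)
    (hpβ : p * β = 0) (hrδ : r * δ = 0) (hqα : q * α = 0) (hsγ : s * γ = 0) :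
    (q = 0 ∧ r = 0 ∧ β = 0 ∧ γ = 0) ∨ (p = 0 ∧ s = 0 ∧ α = 0 ∧ δ = 0) := by
  by_cases hβ : β = 0
  · have hα : α ≠ 0 := by rintro rfl; simp [hβ] at hαβγδ
    have hδ : δ ≠ 0 := by rintro rfl; simp [hβ] at hαβγδ
    have hq : q = 0 := (mul_eq_zero.1 hqα).resolve_right hα
    have hr : r = 0 := (mul_eq_zero.1 hrδ).resolve_right hδ
    have hs : s ≠ 0 := by rintro rfl; simp [hq] at hpqrs
    exact Or.inl ⟨hq, hr, hβ, (mul_eq_zero.1 hsγ).resolve_left hs⟩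
  · have hp : p = 0 := (mul_eq_zero.1 hpβ).resolve_right hβ
    have hq : q ≠ 0 := by rintro rfl; simp [hp] at hpqrs
    have hr : r ≠ 0 := by rintro rfl; simp [hp] at hpqrs
    have hα : α = 0 := (mul_eq_zero.1 hqα).resolve_left hq
    have hγ : γ ≠ 0 := by rintro rfl; simp [hα] at hαβγδ
    exact Or.inr ⟨hp, (mul_eq_zero.1 hsγ).resolve_right hγ, hα,
      (mul_eq_zero.1 hrδ).resolve_left hr⟩

section Rep

variable {K ι : Type*} [Field K]

lemma exists_rep_mk_eq_smul (v : ι → K) (hv : v ≠ 0) :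
    ∃ a : K, a ≠ 0 ∧ (mk K v hv).rep = a • v := by
  obtain ⟨a, ha⟩ := exists_smul_eq_mk_rep K v hv
  exact ⟨a, a.ne_zero, ha.symm⟩

lemma rep_mk_apply_ne_zero_iff (v : ι → K) (hv : v ≠ 0) (i : ι) :
    (mk K v hv).rep i ≠ 0 ↔ v i ≠ 0 := by
  obtain ⟨a, ha, hrep⟩ := exists_rep_mk_eq_smul v hv
  simp [hrep, ha]

end Rep

lemma mulVec_ne_zero_of_isUnit {n R : Type*} [Fintype n] [DecidableEq n] [CommRing R]
    {M : Matrix n n R} (hM : IsUnit M) {v : n → R} (hv : v ≠ 0) : M *ᵥ v ≠ 0 := by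
  simpa using (Matrix.mulVec_injective_of_isUnit hM).ne hv

lemma matAct_mk {n : ℕ} (A : GL (Fin n) ℂ) (v : Fin n → ℂ) (hv : v ≠ 0) :
    matAct A (mk ℂ v hv) = mk ℂ (A *ᵥ v) (mulVec_ne_zero_of_isUnit A.isUnit hv) :=
  rfl

lemma matAct_surjective {n : ℕ} (A : GL (Fin n) ℂ) : Function.Surjective (matAct A) := by
  refine fun u => ⟨matAct A⁻¹ u, ?_⟩
  induction u using ind with | h v hv =>
  simp [matAct_mk, Matrix.mulVec_mulVec]

lemma pairAct_mk (A : GL (Fin 2) ℂ) (B : GL (Fin 3) ℂ) {v : Fin 2 → ℂ} {w : Fin 3 → ℂ}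
    (hv : v ≠ 0) (hw : w ≠ 0) :
    pairAct A B (mk ℂ v hv, mk ℂ w hw) =
      (mk ℂ (A *ᵥ v) (mulVec_ne_zero_of_isUnit A.isUnit hv),
        mk ℂ (B *ᵥ w) (mulVec_ne_zero_of_isUnit B.isUnit hw)) :=
  rfl

lemma pairAct_surjective (A : GL (Fin 2) ℂ) (B : GL (Fin 3) ℂ) :
    Function.Surjective (pairAct A B) :=
  (matAct_surjective A).prodMap (matAct_surjective B)

def InGammaCCone (v : Fin 2 → ℂ) (w : Fin 3 → ℂ) : Prop :=
  v 0 * w 0 ^ 2 + v 1 * w 1 ^ 2 = 0 ∧ w 2 = 0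

lemma mk_mem_gammaC_iff {v : Fin 2 → ℂ} {w : Fin 3 → ℂ} (hv : v ≠ 0) (hw : w ≠ 0) :
    (mk ℂ v hv, mk ℂ w hw) ∈ gammaC ↔ InGammaCCone v w := by
  obtain ⟨a, ha, hva⟩ := exists_rep_mk_eq_smul v hv
  obtain ⟨b, hb, hwb⟩ := exists_rep_mk_eq_smul w hw
  have hscale : a * v 0 * (b * w 0) ^ 2 + a * v 1 * (b * w 1) ^ 2 =
      a * b ^ 2 * (v 0 * w 0 ^ 2 + v 1 * w 1 ^ 2) := by ring
  simp [gammaC, InGammaCCone, hva, hwb, hscale, ha, hb]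

lemma inGammaCCone_param (t : ℂ) : InGammaCCone ![1, -t ^ 2] ![t, 1, 0] := by
  simp [InGammaCCone]

def IsNormalForm (M : Matrix (Fin 2) (Fin 2) ℂ) (N : Matrix (Fin 3) (Fin 3) ℂ) : Prop :=
  ∃ (a₁ a₂ b₁ b₂ c d : ℂ), a₁ ≠ 0 ∧ a₂ ≠ 0 ∧ c ≠ 0 ∧ d ≠ 0 ∧
    ((M = c • !![a₁ ^ 2, 0; 0, 1] ∧ N = d • !![1, 0, b₁; 0, a₁, b₂; 0, 0, a₂]) ∨
     (M = c • !![0, a₁ ^ 2; 1, 0] ∧ N = d • !![0, 1, b₁; a₁, 0, b₂; 0, 0, a₂]))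

namespace IsNormalForm

variable {M : Matrix (Fin 2) (Fin 2) ℂ} {N : Matrix (Fin 3) (Fin 3) ℂ}

lemma inGammaCCone_mulVec_iff (h : IsNormalForm M N) (v : Fin 2 → ℂ) (w : Fin 3 → ℂ) :
    InGammaCCone (M *ᵥ v) (N *ᵥ w) ↔ InGammaCCone v w := by
  obtain ⟨a₁, a₂, b₁, b₂, c, d, ha₁, ha₂, hc, hd, ⟨rfl, rfl⟩ | ⟨rfl, rfl⟩⟩ := h
  all_goals
    have hk : c * d ^ 2 * a₁ ^ 2 ≠ 0 := by simp [hc, hd, ha₁]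
    simp only [InGammaCCone, Matrix.mulVec, dotProduct, Fin.sum_univ_two, Fin.sum_univ_three,
      Matrix.smul_of, Matrix.of_apply, Pi.smul_apply, Matrix.cons_val, smul_eq_mul]
    constructor
    · rintro ⟨hquad, hlin⟩
      have hw : w 2 = 0 := by simpa [hd, ha₂] using hlin
      rw [hw] at hquad
      refine ⟨(mul_eq_zero.1 ?_).resolve_left hk, hw⟩
      linear_combination hquad
    · rintro ⟨hquad, hw⟩
      rw [hw]
      exact ⟨by linear_combination c * d ^ 2 * a₁ ^ 2 * hquad, by ring⟩

lemma mulVec_basePt_ne_zero (h : IsNormalForm M N) :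
    (M *ᵥ ![1, 1]) 0 * (M *ᵥ ![1, 1]) 1 ≠ 0 ∧ (N *ᵥ ![0, 0, 1]) 2 ≠ 0 := by
  obtain ⟨a₁, a₂, b₁, b₂, c, d, ha₁, ha₂, hc, hd, ⟨rfl, rfl⟩ | ⟨rfl, rfl⟩⟩ := h <;>
    simp [Matrix.mulVec, dotProduct, Fin.sum_univ_two, Fin.sum_univ_three, ha₁, ha₂, hc, hd]

lemma preimage_gammaC {A : GL (Fin 2) ℂ} {B : GL (Fin 3) ℂ} (h : IsNormalForm A B) :
    pairAct A B ⁻¹' gammaC = gammaC := by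
  ext ⟨x, y⟩
  induction x using ind with | h v hv =>
  induction y using ind with | h w hw =>
  rw [Set.mem_preimage, pairAct_mk, mk_mem_gammaC_iff, mk_mem_gammaC_iff,
    h.inGammaCCone_mulVec_iff]

lemma image_gammaC {A : GL (Fin 2) ℂ} {B : GL (Fin 3) ℂ} (h : IsNormalForm A B) :
    pairAct A B '' gammaC = gammaC := by
  conv_lhs => rw [← h.preimage_gammaC]
  exact Set.image_preimage_eq _ (pairAct_surjective A B)

end IsNormalForm

lemma isNormalForm_diagonal {p s α δ x y z : ℂ} (hrel : p * α ^ 2 = s * δ ^ 2)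
    (hM : (!![p, 0; 0, s]).det ≠ 0) (hN : (!![α, 0, x; 0, δ, y; 0, 0, z]).det ≠ 0) :
    IsNormalForm !![p, 0; 0, s] !![α, 0, x; 0, δ, y; 0, 0, z] := by
  simp only [Matrix.det_fin_two_of, Matrix.det_fin_three] at hM hN
  obtain ⟨-, hs⟩ : p ≠ 0 ∧ s ≠ 0 := by simpa using hM
  obtain ⟨⟨hα, hδ⟩, hz⟩ : (α ≠ 0 ∧ δ ≠ 0) ∧ z ≠ 0 := by simpa using hN
  refine ⟨δ / α, z / α, x / α, y / α, s, α, div_ne_zero hδ hα, div_ne_zero hz hα, hs, hα,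
    Or.inl ⟨?_, ?_⟩⟩
  · rw [show p = s * (δ / α) ^ 2 by field_simp; linear_combination hrel]
    ext i j
    fin_cases i <;> fin_cases j <;> simp
  · ext i j
    fin_cases i <;> fin_cases j <;> simp <;> field_simp

lemma isNormalForm_antidiagonal {q r β γ x y z : ℂ} (hrel : q * β ^ 2 = r * γ ^ 2)
    (hM : (!![0, q; r, 0]).det ≠ 0) (hN : (!![0, β, x; γ, 0, y; 0, 0, z]).det ≠ 0) :
    IsNormalForm !![0, q; r, 0] !![0, β, x; γ, 0, y; 0, 0, z] := by
  simp only [Matrix.det_fin_two_of, Matrix.det_fin_three] at hM hN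
  obtain ⟨-, hr⟩ : q ≠ 0 ∧ r ≠ 0 := by simpa using hM
  obtain ⟨⟨hβ, hγ⟩, hz⟩ : (β ≠ 0 ∧ γ ≠ 0) ∧ z ≠ 0 := by simpa using hN
  refine ⟨γ / β, z / β, x / β, y / β, r, β, div_ne_zero hγ hβ, div_ne_zero hz hβ, hr, hβ,
    Or.inr ⟨?_, ?_⟩⟩
  · rw [show q = r * (γ / β) ^ 2 by field_simp; linear_combination hrel]
    ext i j
    fin_cases i <;> fin_cases j <;> simp
  · ext i j
    fin_cases i <;> fin_cases j <;> simp <;> field_simp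

lemma isNormalForm_of_forall_inGammaCCone {M : Matrix (Fin 2) (Fin 2) ℂ}
    {N : Matrix (Fin 3) (Fin 3) ℂ} (hM : M.det ≠ 0) (hN : N.det ≠ 0)
    (h : ∀ t : ℂ, InGammaCCone (M *ᵥ ![1, -t ^ 2]) (N *ᵥ ![t, 1, 0])) : IsNormalForm M N := by
  obtain ⟨p, q, r, s, rfl⟩ : ∃ p q r s, M = !![p, q; r, s] := ⟨_, _, _, _, M.eta_fin_two⟩
  obtain ⟨α, β, x, γ, δ, y, μ, ν, z, rfl⟩ :
      ∃ α β x γ δ y μ ν z, N = !![α, β, x; γ, δ, y; μ, ν, z] :=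
    ⟨_, _, _, _, _, _, _, _, _, N.eta_fin_three⟩
  simp only [InGammaCCone, Matrix.mulVec, dotProduct, Fin.sum_univ_two, Fin.sum_univ_three,
    Matrix.of_apply, Matrix.cons_val', Matrix.cons_val_zero, Matrix.cons_val_one, Matrix.cons_val,
    Matrix.cons_val_fin_one, mul_one, mul_zero, add_zero] at h
  obtain rfl : ν = 0 := by simpa using (h 0).2
  obtain rfl : μ = 0 := by simpa using (h 1).2
  have hpqrs : p * s - q * r ≠ 0 := by simpa [Matrix.det_fin_two_of] using hM
  have hαβγδ : α * δ - β * γ ≠ 0 := by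
    rintro hzero
    refine hN ?_
    simp only [Matrix.det_fin_three, Matrix.of_apply, Matrix.cons_val', Matrix.cons_val_zero,
      Matrix.cons_val_one, Matrix.cons_val, Matrix.cons_val_fin_one, mul_zero, sub_zero, add_zero]
    linear_combination z * hzero
  obtain ⟨e₀, e₁, e₂, e₃, e₄⟩ := quartic_coeffs_eq_zero (c₀ := p * β ^ 2 + r * δ ^ 2)
    (c₁ := 2 * (p * α * β + r * γ * δ)) (c₂ := p * α ^ 2 - q * β ^ 2 + r * γ ^ 2 - s * δ ^ 2)
    (c₃ := -2 * (q * α * β + s * γ * δ)) (c₄ := -(q * α ^ 2 + s * γ ^ 2))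
    fun t => by linear_combination (h t).1
  obtain ⟨hpβ, hrδ⟩ := eq_zero_of_orthogonal_of_det_ne_zero (u₁ := p * β) (u₂ := r * δ) hαβγδ
    (by linear_combination e₁ / 2) (by linear_combination e₀)
  obtain ⟨hqα, hsγ⟩ := eq_zero_of_orthogonal_of_det_ne_zero (u₁ := q * α) (u₂ := s * γ) hαβγδ
    (by linear_combination -e₄) (by linear_combination -e₃ / 2)
  obtain ⟨rfl, rfl, rfl, rfl⟩ | ⟨rfl, rfl, rfl, rfl⟩ :=
    diagonal_or_antidiagonal hpqrs hαβγδ hpβ hrδ hqα hsγ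
  · exact isNormalForm_diagonal (by linear_combination e₂) hM hN
  · exact isNormalForm_antidiagonal (by linear_combination -e₂) hM hN

lemma pairAct_image_gammaC_eq_iff {A : GL (Fin 2) ℂ} {B : GL (Fin 3) ℂ} :
    pairAct A B '' gammaC = gammaC ↔ IsNormalForm A B := by
  refine ⟨fun h => isNormalForm_of_forall_inGammaCCone A.det_ne_zero B.det_ne_zero fun t => ?_,
    IsNormalForm.image_gammaC⟩
  have hv : (![1, -t ^ 2] : Fin 2 → ℂ) ≠ 0 := fun h => by simpa using congrFun h 0
  have hw : (![t, 1, 0] : Fin 3 → ℂ) ≠ 0 := fun h => by simpa using congrFun h 1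
  have hmem := Set.mapsTo_iff_image_subset.2 h.subset
    ((mk_mem_gammaC_iff hv hw).2 (inGammaCCone_param t))
  rwa [pairAct_mk, mk_mem_gammaC_iff] at hmem

lemma IsNormalForm.pairAct_basePt_mem {A : GL (Fin 2) ℂ} {B : GL (Fin 3) ℂ}
    (h : IsNormalForm A B) :
    (pairAct A B basePt).1.rep 0 * (pairAct A B basePt).1.rep 1 ≠ 0 ∧
      (pairAct A B basePt).2.rep 2 ≠ 0 := by
  obtain ⟨h₁, h₂⟩ := h.mulVec_basePt_ne_zero
  simp only [basePt, pairAct_mk, mul_ne_zero_iff, rep_mk_apply_ne_zero_iff] at h₁ h₂ ⊢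
  exact ⟨h₁, h₂⟩

lemma exists_isNormalForm_pairAct_basePt_eq {z : P1C × P2C}
    (hx : z.1.rep 0 * z.1.rep 1 ≠ 0) (hy : z.2.rep 2 ≠ 0) :
    ∃ (A : GL (Fin 2) ℂ) (B : GL (Fin 3) ℂ), IsNormalForm A B ∧ pairAct A B basePt = z := by
  obtain ⟨x, y⟩ := z
  dsimp only at hx hy
  obtain ⟨hx₀, hx₁⟩ := mul_ne_zero_iff.1 hx
  obtain ⟨a, ha⟩ := IsAlgClosed.exists_pow_nat_eq (x.rep 0 / x.rep 1) two_pos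
  have ha₀ : a ≠ 0 := by rintro rfl; exact div_ne_zero hx₀ hx₁ (by simpa using ha.symm)
  set M : Matrix (Fin 2) (Fin 2) ℂ := x.rep 1 • !![a ^ 2, 0; 0, 1]
  set N : Matrix (Fin 3) (Fin 3) ℂ := !![1, 0, y.rep 0; 0, a, y.rep 1; 0, 0, y.rep 2]
  have hM : M.det ≠ 0 := by simp [M, Matrix.det_fin_two_of, hx₁, ha₀]
  have hN : N.det ≠ 0 := by simp [N, Matrix.det_fin_three, ha₀, hy]
  have hMv : M *ᵥ ![1, 1] = x.rep := by
    ext i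
    fin_cases i <;> simp [M, Matrix.mulVec, dotProduct, Fin.sum_univ_two, ha, mul_div_cancel₀ _ hx₁]
  have hNv : N *ᵥ ![0, 0, 1] = y.rep := by
    ext i
    fin_cases i <;> simp [N, Matrix.mulVec, dotProduct, Fin.sum_univ_three]
  refine ⟨.mkOfDetNeZero M hM, .mkOfDetNeZero N hN,
    ⟨a, y.rep 2, y.rep 0, y.rep 1, x.rep 1, 1, ha₀, hy, hx₁, one_ne_zero,
      Or.inl ⟨rfl, (one_smul _ _).symm⟩⟩, ?_⟩
  simp only [basePt, pairAct_mk, Matrix.GeneralLinearGroup.val_mkOfDetNeZero, hMv, hNv, mk_rep]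

/-- An element `(A, B) ∈ PGL₂(ℂ) × PGL₃(ℂ)` preserves `γ_c` iff it is
represented by matrices of the form (i)
`A = [[a₁²,0],[0,1]], B = [[1,0,b₁],[0,a₁,b₂],[0,0,a₂]]` or (ii)
`A = [[0,a₁²],[1,0]], B = [[0,1,b₁],[a₁,0,b₂],[0,0,a₂]]` with `a₁, a₂ ∈ ℂ*`,
`b₁, b₂ ∈ ℂ`; moreover the orbit of `((1:1),(0:0:1))` under the group `G` of all such
elements is the open set `{x₁x₂ ≠ 0, y₃ ≠ 0}`, so the action of `G` on `ℙ¹ × ℙ²` is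
quasi-homogeneous. -/
theorem preserving_gammaC_characterization_and_open_orbit :
    (∀ (A : GL (Fin 2) ℂ) (B : GL (Fin 3) ℂ),
      pairAct A B '' gammaC = gammaC ↔
        ∃ (a₁ a₂ b₁ b₂ c d : ℂ), a₁ ≠ 0 ∧ a₂ ≠ 0 ∧ c ≠ 0 ∧ d ≠ 0 ∧
          (((A : Matrix (Fin 2) (Fin 2) ℂ) = c • !![a₁ ^ 2, 0; 0, 1] ∧
            (B : Matrix (Fin 3) (Fin 3) ℂ) = d • !![1, 0, b₁; 0, a₁, b₂; 0, 0, a₂]) ∨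
           ((A : Matrix (Fin 2) (Fin 2) ℂ) = c • !![0, a₁ ^ 2; 1, 0] ∧
            (B : Matrix (Fin 3) (Fin 3) ℂ) = d • !![0, 1, b₁; a₁, 0, b₂; 0, 0, a₂]))) ∧
    {z : P1C × P2C | ∃ (A : GL (Fin 2) ℂ) (B : GL (Fin 3) ℂ),
        pairAct A B '' gammaC = gammaC ∧ pairAct A B basePt = z} =
      {z : P1C × P2C | z.1.rep 0 * z.1.rep 1 ≠ 0 ∧ z.2.rep 2 ≠ 0} := by
  refine ⟨fun A B => pairAct_image_gammaC_eq_iff, Set.ext fun z => ⟨?_, ?_⟩⟩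
  · rintro ⟨A, B, h, rfl⟩
    exact (pairAct_image_gammaC_eq_iff.1 h).pairAct_basePt_mem
  · rintro ⟨hx, hy⟩
    obtain ⟨A, B, h, rfl⟩ := exists_isNormalForm_pairAct_basePt_eq hx hy
    exact ⟨A, B, pairAct_image_gammaC_eq_iff.2 h, rfl⟩
end
end

section
/- Fix an integer g ≥ 2. Define, for b ∈ ℂ, a map T_b: ℂ^{2g+2} → ℂ^{2g+2} on coordinates (p̃₀,…,p̃_g, q̃₀,…,q̃_g) by p̃'_i = Σ_{k=i}^{g} binom(k,i) b^{k−i} p̃_k for 0 ≤ i ≤ g, and q̃'_j = Σ_{l=j}^{g} binom(l,j) b^{l−j} q̃_l + binom(g+1,j) b^{g+1−j} for 0 ≤ j ≤ g. Then b ↦ T_b is an action of the additive group (ℂ, +) on ℂ^{2g+2}; in this action q̃'_g = q̃_g + (g+1)b, so the stabilizer of every point is trivial, and every orbit meets the hyperplane {q̃_g = 0} in exactly one point. Consequently the quotient of ℂ^{2g+2} by this action is birationally identified with the affine space {q̃_g = 0} ≅ ℂ^{2g+1}. -/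
/-!
With `q̃_{g+1}` normalized to `1`, the point `(p̃, q̃)` is the pair of coefficient vectors of
`Σ p̃_k y^k` and `Σ q̃_l y^l + y^{g+1}`, and `T_b` is the substitution `y ↦ y + b` on both:
both components are multiplication by the matrix `(C(k,i) b^{k-i})`, and `T_b ∘ T_c = T_{b+c}`
is `(y + c + b)^l = (y + (b + c))^l` read off on coefficients. The coordinate `q̃_g` moves by
`(g+1) b`, so `b = -q̃_g / (g+1)` is the unique translation of a point onto `{q̃_g = 0}`, which
is therefore a cross-section of the orbits.
-/

noncomputable section
open Finset

/-- The coordinate space `ℂ^{2g+2} = (p̃₀,…,p̃_g) × (q̃₀,…,q̃_g)`. -/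
abbrev CoordSpace (g : ℕ) : Type := (Fin (g + 1) → ℂ) × (Fin (g + 1) → ℂ)

/-- The map `T_b : ℂ^{2g+2} → ℂ^{2g+2}`,
`p̃'_i = Σ_{k=i}^{g} C(k,i) b^{k−i} p̃_k`,
`q̃'_j = Σ_{l=j}^{g} C(l,j) b^{l−j} q̃_l + C(g+1,j) b^{g+1−j}`. -/
def Tb (g : ℕ) (b : ℂ) (v : CoordSpace g) : CoordSpace g :=
  (fun i => ∑ k : Fin (g + 1), if (i : ℕ) ≤ (k : ℕ) then
      ((k : ℕ).choose (i : ℕ) : ℂ) * b ^ ((k : ℕ) - (i : ℕ)) * v.1 k else 0,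
   fun j => (∑ l : Fin (g + 1), if (j : ℕ) ≤ (l : ℕ) then
      ((l : ℕ).choose (j : ℕ) : ℂ) * b ^ ((l : ℕ) - (j : ℕ)) * v.2 l else 0)
    + ((g + 1).choose (j : ℕ) : ℂ) * b ^ (g + 1 - (j : ℕ)))

def TbOrbitRel (g : ℕ) (v w : CoordSpace g) : Prop := ∃ b : ℂ, Tb g b v = w

open Polynomial Matrix

theorem sum_choose_mul_pow_mul_choose_mul_pow {R : Type*} [CommSemiring R] (b c : R) (i l : ℕ) :
    ∑ k ∈ range (l + 1), (k.choose i : R) * b ^ (k - i) * ((l.choose k : R) * c ^ (l - k)) =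
      (l.choose i : R) * (b + c) ^ (l - i) := by
  have h := congrArg (coeff · i) (show (X + C b + C c) ^ l = (X + C (b + c)) ^ l by
    rw [C_add, add_assoc])
  simp only [add_pow (X + C b), finsetSum_coeff, ← C_pow, ← C_eq_natCast, ← C_mul, mul_assoc,
    coeff_mul_C, coeff_X_add_C_pow] at h
  rw [mul_comm, ← h]
  exact sum_congr rfl fun k _ => by ring

section TaylorShift

variable {R : Type*} [CommSemiring R]

/-- No guard `i ≤ k` is needed: `Nat.choose k i = 0` for `k < i`. -/
def taylorShiftMatrix (n : ℕ) (b : R) : Matrix (Fin n) (Fin n) R :=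
  Matrix.of fun i k => ((k : ℕ).choose i : R) * b ^ ((k : ℕ) - i)

theorem taylorShiftMatrix_apply (n : ℕ) (b : R) (i k : Fin n) :
    taylorShiftMatrix n b i k = ((k : ℕ).choose i : R) * b ^ ((k : ℕ) - i) := rfl

theorem taylorShiftMatrix_mul (n : ℕ) (b c : R) :
    taylorShiftMatrix n b * taylorShiftMatrix n c = taylorShiftMatrix n (b + c) := by
  ext i l
  simp only [mul_apply, taylorShiftMatrix_apply]
  rw [← sum_choose_mul_pow_mul_choose_mul_pow, sum_subset (range_subset_range.2 l.isLt),
    ← Fin.sum_univ_eq_sum_range]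
  intro k _ hk
  rw [Nat.choose_eq_zero_of_lt (n := l) (by simpa using hk)]
  simp

theorem taylorShiftMatrix_zero (n : ℕ) : taylorShiftMatrix n (0 : R) = 1 := by
  ext i k
  rw [taylorShiftMatrix_apply, one_apply]
  rcases lt_trichotomy i k with h | rfl | h
  · simp [h.ne, zero_pow (Nat.sub_ne_zero_of_lt h)]
  · simp
  · simp [h.ne', Nat.choose_eq_zero_of_lt h]

theorem taylorShiftMatrix_mulVec_last (n : ℕ) (b : R) (v : Fin (n + 1) → R) :
    (taylorShiftMatrix (n + 1) b *ᵥ v) (Fin.last n) = v (Fin.last n) := by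
  simp [mulVec, dotProduct, Fin.sum_univ_castSucc, taylorShiftMatrix_apply,
    Nat.choose_eq_zero_of_lt]

theorem taylorShiftMatrix_mulVec_castSucc_last (n : ℕ) (b : R) (v : Fin (n + 2) → R) :
    (taylorShiftMatrix (n + 2) b *ᵥ v) (Fin.last n).castSucc =
      v (Fin.last n).castSucc + (n + 1) * b * v (Fin.last (n + 1)) := by
  simp [mulVec, dotProduct, Fin.sum_univ_castSucc, taylorShiftMatrix_apply,
    Nat.choose_eq_zero_of_lt]

end TaylorShift

theorem ite_le_choose_mul {R : Type*} [Semiring R] (i k : ℕ) (x : R) :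
    (if i ≤ k then (k.choose i : R) * x else 0) = k.choose i * x := by
  split_ifs with h
  · rfl
  · simp [Nat.choose_eq_zero_of_lt (not_le.1 h)]

theorem Tb_eq (g : ℕ) (b : ℂ) (v : CoordSpace g) :
    Tb g b v = (taylorShiftMatrix (g + 1) b *ᵥ v.1,
      Fin.init (taylorShiftMatrix (g + 2) b *ᵥ Fin.snoc v.2 1)) := by
  simp only [Tb, mul_assoc, ite_le_choose_mul]
  ext i
  · simp [mulVec, dotProduct, taylorShiftMatrix_apply, mul_assoc]
  · simp [mulVec, dotProduct, taylorShiftMatrix_apply, mul_assoc, Fin.init, Fin.sum_univ_castSucc]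

theorem Tb_zero (g : ℕ) : Tb g 0 = id := by
  funext v
  simp [Tb_eq, taylorShiftMatrix_zero]

theorem Tb_Tb (g : ℕ) (b c : ℂ) (v : CoordSpace g) : Tb g b (Tb g c v) = Tb g (b + c) v := by
  have hlast : (taylorShiftMatrix (g + 2) c *ᵥ Fin.snoc v.2 1) (Fin.last (g + 1)) = 1 := by
    simp [taylorShiftMatrix_mulVec_last]
  have hsnoc := Fin.snoc_init_self (taylorShiftMatrix (g + 2) c *ᵥ Fin.snoc v.2 1)
  rw [hlast] at hsnoc
  simp only [Tb_eq, hsnoc, mulVec_mulVec, taylorShiftMatrix_mul]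

theorem Tb_snd_last (g : ℕ) (b : ℂ) (v : CoordSpace g) :
    (Tb g b v).2 (Fin.last g) = v.2 (Fin.last g) + (g + 1) * b := by
  simp [Tb_eq, Fin.init, taylorShiftMatrix_mulVec_castSucc_last]

theorem eq_zero_of_Tb_eq_self (g : ℕ) (b : ℂ) (v : CoordSpace g) (h : Tb g b v = v) :
    b = 0 := by
  have hlast := Tb_snd_last g b v
  rw [h, left_eq_add, mul_eq_zero] at hlast
  exact hlast.resolve_left (by exact_mod_cast g.succ_ne_zero)

structure NormalForm {α : Type*} (r : α → α → Prop) (P : α → Prop) where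
  nf : α → α
  rel_nf : ∀ a, r a (nf a)
  nf_eq_of_rel : ∀ a b, r a b → nf a = nf b
  prop_nf : ∀ a, P (nf a)
  nf_eq_self : ∀ a, P a → nf a = a

namespace NormalForm

variable {α : Type*} {r : α → α → Prop} {P : α → Prop}

theorem existsUnique (N : NormalForm r P) (a : α) : ∃! w, r a w ∧ P w :=
  ⟨N.nf a, ⟨N.rel_nf a, N.prop_nf a⟩, fun w ⟨hw, hPw⟩ =>
    (N.nf_eq_self w hPw).symm.trans (N.nf_eq_of_rel a w hw).symm⟩

def quotEquiv (N : NormalForm r P) : Quot r ≃ {a // P a} where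
  toFun := Quot.lift (fun a => ⟨N.nf a, N.prop_nf a⟩) fun a b h =>
    Subtype.ext (N.nf_eq_of_rel a b h)
  invFun w := Quot.mk r w
  left_inv := Quot.ind fun a => (Quot.sound (N.rel_nf a)).symm
  right_inv w := Subtype.ext (N.nf_eq_self w w.2)

end NormalForm

def TbNormalForm (g : ℕ) : NormalForm (TbOrbitRel g) (fun w => w.2 (Fin.last g) = 0) where
  nf v := Tb g (-v.2 (Fin.last g) / (g + 1)) v
  rel_nf v := ⟨_, rfl⟩
  nf_eq_of_rel := by
    rintro v _ ⟨c, rfl⟩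
    rw [Tb_Tb, Tb_snd_last]
    congr 1
    field_simp
    ring
  prop_nf v := by
    rw [Tb_snd_last]
    field_simp
    ring
  nf_eq_self w hw := by simp [hw, Tb_zero]

def hyperplaneEquiv (g : ℕ) :
    {w : CoordSpace g // w.2 (Fin.last g) = 0} ≃ (Fin (2 * g + 1) → ℂ) :=
  let splitLast :
      {w : CoordSpace g // w.2 (Fin.last g) = 0} ≃ (Fin (g + 1) → ℂ) × (Fin g → ℂ) :=
    { toFun w := (w.1.1, Fin.init w.1.2)
      invFun x := ⟨(x.1, Fin.snoc x.2 0), Fin.snoc_last (α := fun _ => ℂ) _ _⟩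
      left_inv := by
        rintro ⟨⟨p, q⟩, hq⟩
        simp only [← hq, Fin.snoc_init_self]
      right_inv x := by simp }
  (splitLast.trans (Fin.appendEquiv _ _)).trans ((finCongr (by omega)).arrowCongr (.refl ℂ))

theorem additive_action_and_quotient_general (g : ℕ) :
    -- b ↦ T_b is an action of (ℂ, +):
    (Tb g 0 = id) ∧
    (∀ b c : ℂ, ∀ v : CoordSpace g, Tb g b (Tb g c v) = Tb g (b + c) v) ∧
    -- the last coordinate transforms by q̃'_g = q̃_g + (g+1)b:
    (∀ b : ℂ, ∀ v : CoordSpace g,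
      (Tb g b v).2 (Fin.last g) = v.2 (Fin.last g) + (g + 1) * b) ∧
    -- the stabilizer of every point is trivial:
    (∀ b : ℂ, ∀ v : CoordSpace g, Tb g b v = v → b = 0) ∧
    -- every orbit meets the hyperplane {q̃_g = 0} in exactly one point:
    (∀ v : CoordSpace g, ∃! w : CoordSpace g,
      TbOrbitRel g v w ∧ w.2 (Fin.last g) = 0) ∧
    -- hence the orbit space is in bijection with {q̃_g = 0} ≅ ℂ^{2g+1}:
    Nonempty (Quot (TbOrbitRel g) ≃ (Fin (2 * g + 1) → ℂ)) :=
  ⟨Tb_zero g, Tb_Tb g, Tb_snd_last g, eq_zero_of_Tb_eq_self g, (TbNormalForm g).existsUnique,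
    ⟨(TbNormalForm g).quotEquiv.trans (hyperplaneEquiv g)⟩⟩

/-- `b ↦ T_b` is an action of the additive group `(ℂ,+)` on
`ℂ^{2g+2}`; in this action `q̃'_g = q̃_g + (g+1)b`, so the stabilizer of every point
is trivial and every orbit meets the hyperplane `{q̃_g = 0}` in exactly one point;
consequently the quotient of `ℂ^{2g+2}` by this action is (birationally) identified
with the affine space `{q̃_g = 0} ≅ ℂ^{2g+1}`. -/
theorem additive_action_and_quotient (g : ℕ) (hg : 2 ≤ g) :
    -- b ↦ T_b is an action of (ℂ, +):
    (Tb g 0 = id) ∧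
    (∀ b c : ℂ, ∀ v : CoordSpace g, Tb g b (Tb g c v) = Tb g (b + c) v) ∧
    -- the last coordinate transforms by q̃'_g = q̃_g + (g+1)b:
    (∀ b : ℂ, ∀ v : CoordSpace g,
      (Tb g b v).2 (Fin.last g) = v.2 (Fin.last g) + (g + 1) * b) ∧
    -- the stabilizer of every point is trivial:
    (∀ b : ℂ, ∀ v : CoordSpace g, Tb g b v = v → b = 0) ∧
    -- every orbit meets the hyperplane {q̃_g = 0} in exactly one point:
    (∀ v : CoordSpace g, ∃! w : CoordSpace g,
      TbOrbitRel g v w ∧ w.2 (Fin.last g) = 0) ∧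
    -- hence the orbit space is in bijection with {q̃_g = 0} ≅ ℂ^{2g+1}:
    Nonempty (Quot (TbOrbitRel g) ≃ (Fin (2 * g + 1) → ℂ)) :=
  additive_action_and_quotient_general g
end
end
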